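/- arXiv:math/0305283 — 3 statements merged into one kernel-verified Lean document; each statement's English description precedes it below -/
import Mathlib

section
/- In a critical system (P, E) (a system minimizing n + e among all systems with I > max(C n^{2/3} e^{2/3}, 3n, 3e), where C = 10^{70}), every point p ∈ P is incident to at least I/(2n) lines of E, and every line ℓ ∈ E is incident to at least I/(2e) points of P. -/
/-- A complex line in `ℂ²`: solutions of `y = a x + b` or a vertical line `x = c`. -/
def IsComplexLine (L : Set (ℂ × ℂ)) : Prop :=
  (∃ a b : ℂ, L = {p : ℂ × ℂ | p.2 = a * p.1 + b}) ∨ ∃ c : ℂ, L = {p : ℂ × ℂ | p.1 = c}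

/-- The number of point–line incidences of a system `(P, E)`. -/
noncomputable def incidences (P : Set (ℂ × ℂ)) (E : Set (Set (ℂ × ℂ))) : ℕ :=
  {pl : (ℂ × ℂ) × Set (ℂ × ℂ) | pl.1 ∈ P ∧ pl.2 ∈ E ∧ pl.1 ∈ pl.2}.ncard

/-!
If a point `p` had degree `< I/(2n)`, deleting it would lose fewer than `I/(2n)` incidences, and
since `(n-1)^{2/3} ≤ (1 - 1/(2n)) n^{2/3}` the smaller system would still satisfy
`I > C n^{2/3} e^{2/3}`. It also stays above `3n` and `3e`, because `I > C n` and `I > C e`: two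
points determine a line, so `I ≤ n² + e` and `I ≤ e² + n`, and with `I > 3e`, `I > 3n` this gives
`e ≤ n²`, `n ≤ e²`, whence `e ≤ n^{2/3} e^{2/3}` and `n ≤ n^{2/3} e^{2/3}`. This contradicts the
minimality of `n + e`. Lines are handled symmetrically.
-/

section IncidenceCard

variable {α β : Type*}

noncomputable def incidenceCard (r : α → β → Prop) (A : Set α) (B : Set β) : ℕ :=
  {x : α × β | x.1 ∈ A ∧ x.2 ∈ B ∧ r x.1 x.2}.ncard

variable {r : α → β → Prop} {A : Set α} {B : Set β}

lemma incidenceCard_flip : incidenceCard (flip r) B A = incidenceCard r A B := by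
  rw [incidenceCard, incidenceCard, ← Set.ncard_image_of_injective _ Prod.swap_injective,
    Set.image_swap_eq_preimage_swap]
  congr 1
  ext ⟨a, b⟩
  simp only [Set.mem_preimage, Set.mem_ofPred_eq, Prod.swap, flip]
  tauto

lemma incidenceCard_le_sdiff_singleton_add (hA : A.Finite) (hB : B.Finite) (a : α) :
    incidenceCard r A B ≤ incidenceCard r (A \ {a}) B + {b ∈ B | r a b}.ncard := by
  have hcover : {x : α × β | x.1 ∈ A ∧ x.2 ∈ B ∧ r x.1 x.2} ⊆
      {x | x.1 ∈ A \ {a} ∧ x.2 ∈ B ∧ r x.1 x.2} ∪ Prod.mk a '' {b ∈ B | r a b} := by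
    rintro ⟨a', b⟩ ⟨ha', hb, hr⟩
    by_cases h : a' = a
    · subst h
      exact Or.inr ⟨b, ⟨hb, hr⟩, rfl⟩
    · exact Or.inl ⟨⟨ha', h⟩, hb, hr⟩
  have hfin : ({x | x.1 ∈ A \ {a} ∧ x.2 ∈ B ∧ r x.1 x.2} ∪
      Prod.mk a '' {b ∈ B | r a b}).Finite :=
    ((hA.prod hB).subset fun x hx => ⟨hx.1.1, hx.2.1⟩).union ((hB.sep _).image _)
  calc incidenceCard r A B ≤ _ := Set.ncard_le_ncard hcover hfin
    _ ≤ _ := Set.ncard_union_le _ _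
    _ = _ := by rw [Set.ncard_image_of_injective _ (Prod.mk_right_injective a)]; rfl

/-- A pair `(a, b)` whose `b` is related to a second `a' ∈ A` is determined by `(a, a')`;
any other pair is determined by `b`. -/
lemma incidenceCard_le_sq_add (hA : A.Finite) (hB : B.Finite)
    (hlin : ∀ a₁ ∈ A, ∀ a₂ ∈ A, ∀ b₁ ∈ B, ∀ b₂ ∈ B,
      a₁ ≠ a₂ → r a₁ b₁ → r a₂ b₁ → r a₁ b₂ → r a₂ b₂ → b₁ = b₂) :
    incidenceCard r A B ≤ A.ncard ^ 2 + B.ncard := by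
  set S := {x : α × β | x.1 ∈ A ∧ x.2 ∈ B ∧ r x.1 x.2}
  set S₁ := {x ∈ S | ∃ a ∈ A, a ≠ x.1 ∧ r a x.2}
  have hsecond (x : α × β) : ∃ a, x ∈ S₁ → a ∈ A ∧ a ≠ x.1 ∧ r a x.2 := by
    by_cases h : x ∈ S₁
    · exact ⟨h.2.choose, fun _ => h.2.choose_spec⟩
    · exact ⟨x.1, fun h' => (h h').elim⟩
  choose f hf using hsecond
  have hS₁ : S₁.ncard ≤ A.ncard ^ 2 := by
    rw [sq, ← Set.ncard_prod]
    refine Set.ncard_le_ncard_of_injOn (fun x => (x.1, f x)) (fun x hx => ⟨hx.1.1, (hf x hx).1⟩)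
      ?_ (hA.prod hA)
    rintro x hx y hy hxy
    obtain ⟨h₁, h₂⟩ := Prod.mk.inj hxy
    obtain ⟨hfx, hne, hfr⟩ := hf x hx
    obtain ⟨-, -, hfr'⟩ := hf y hy
    refine Prod.ext h₁ (hlin _ hx.1.1 _ hfx _ hx.1.2.1 _ hy.1.2.1 hne.symm hx.1.2.2 hfr ?_ ?_)
    · exact h₁ ▸ hy.1.2.2
    · exact h₂ ▸ hfr'
  have hS₂ : (S \ S₁).ncard ≤ B.ncard := by
    refine Set.ncard_le_ncard_of_injOn Prod.snd (fun x hx => hx.1.2.1) ?_ hB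
    rintro x ⟨hx, hx₁⟩ y ⟨hy, -⟩ hxy
    refine Prod.ext (not_not.mp fun hne => hx₁ ⟨hx, y.1, hy.1, Ne.symm hne, ?_⟩) hxy
    exact hxy ▸ hy.2.2
  calc incidenceCard r A B = (S₁ ∪ S \ S₁).ncard := by
        rw [Set.union_sdiff_cancel (Set.sep_subset _ _)]; rfl
    _ ≤ S₁.ncard + (S \ S₁).ncard := Set.ncard_union_le _ _
    _ ≤ A.ncard ^ 2 + B.ncard := add_le_add hS₁ hS₂

end IncidenceCard

lemma IsComplexLine.eq_of_mem {L₁ L₂ : Set (ℂ × ℂ)} (h₁ : IsComplexLine L₁)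
    (h₂ : IsComplexLine L₂) {p q : ℂ × ℂ} (hpq : p ≠ q) (hp₁ : p ∈ L₁) (hq₁ : q ∈ L₁)
    (hp₂ : p ∈ L₂) (hq₂ : q ∈ L₂) : L₁ = L₂ := by
  obtain ⟨a₁, b₁, rfl⟩ | ⟨c₁, rfl⟩ := h₁ <;> obtain ⟨a₂, b₂, rfl⟩ | ⟨c₂, rfl⟩ := h₂ <;>
    simp only [Set.mem_ofPred_eq] at hp₁ hq₁ hp₂ hq₂
  · have hx : p.1 ≠ q.1 := fun hx => hpq (Prod.ext hx (by rw [hp₁, hq₁, hx]))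
    have ha : a₁ = a₂ := by
      have h : (a₁ - a₂) * (p.1 - q.1) = 0 := by
        linear_combination (hp₁.symm.trans hp₂) - (hq₁.symm.trans hq₂)
      exact sub_eq_zero.mp ((mul_eq_zero.mp h).resolve_right (sub_ne_zero.mpr hx))
    have hb : b₁ = b₂ := by linear_combination (hp₁.symm.trans hp₂) - p.1 * ha
    rw [ha, hb]
  · exact absurd (Prod.ext (hp₂.trans hq₂.symm) (by rw [hp₁, hq₁, hp₂, hq₂])) hpq
  · exact absurd (Prod.ext (hp₁.trans hq₁.symm) (by rw [hp₂, hq₂, hp₁, hq₁])) hpq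
  · rw [← hp₁, hp₂]

section Incidences

variable {P : Set (ℂ × ℂ)} {E : Set (Set (ℂ × ℂ))}

lemma incidences_le_sdiff_point_add (hP : P.Finite) (hE : E.Finite) (p : ℂ × ℂ) :
    incidences P E ≤ incidences (P \ {p}) E + {L ∈ E | p ∈ L}.ncard :=
  incidenceCard_le_sdiff_singleton_add (r := (· ∈ ·)) hP hE p

lemma incidences_le_sdiff_line_add (hP : P.Finite) (hE : E.Finite) (L : Set (ℂ × ℂ)) :
    incidences P E ≤ incidences P (E \ {L}) + {p ∈ P | p ∈ L}.ncard := by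
  have h := incidenceCard_le_sdiff_singleton_add (r := flip (· ∈ ·)) hE hP L
  rwa [incidenceCard_flip, incidenceCard_flip] at h

lemma incidences_le_ncard_points_sq_add (hP : P.Finite) (hE : E.Finite)
    (hlines : ∀ L ∈ E, IsComplexLine L) : incidences P E ≤ P.ncard ^ 2 + E.ncard :=
  incidenceCard_le_sq_add (r := (· ∈ ·)) hP hE fun _ _ _ _ _ hL₁ _ hL₂ hne hp₁ hq₁ hp₂ hq₂ =>
    (hlines _ hL₁).eq_of_mem (hlines _ hL₂) hne hp₁ hq₁ hp₂ hq₂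

lemma incidences_le_ncard_lines_sq_add (hP : P.Finite) (hE : E.Finite)
    (hlines : ∀ L ∈ E, IsComplexLine L) : incidences P E ≤ E.ncard ^ 2 + P.ncard := by
  change incidenceCard (· ∈ ·) P E ≤ _
  rw [← incidenceCard_flip]
  refine incidenceCard_le_sq_add hE hP fun L₁ hL₁ L₂ hL₂ p _ q _ hne hp₁ hp₂ hq₁ hq₂ => ?_
  by_contra hpq
  exact hne ((hlines _ hL₁).eq_of_mem (hlines _ hL₂) hpq hp₁ hq₁ hp₂ hq₂)

end Incidences

lemma le_rpow_two_thirds_mul_rpow_two_thirds {x y : ℝ} (hx : 0 ≤ x) (hy : 0 ≤ y)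
    (h : y ≤ x ^ 2) : y ≤ x ^ ((2 : ℝ) / 3) * y ^ ((2 : ℝ) / 3) := by
  have hsq : (x ^ 2) ^ ((1 : ℝ) / 3) = x ^ ((2 : ℝ) / 3) := by
    rw [← Real.rpow_natCast, ← Real.rpow_mul hx]; norm_num
  calc y = y ^ ((1 : ℝ) / 3) * y ^ ((2 : ℝ) / 3) := by
        rw [← Real.rpow_add' hy (by norm_num)]; norm_num
    _ ≤ x ^ ((2 : ℝ) / 3) * y ^ ((2 : ℝ) / 3) := by
        gcongr
        exact hsq ▸ Real.rpow_le_rpow hy h (by norm_num)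

lemma sub_one_rpow_two_thirds_le {x : ℝ} (hx : 1 ≤ x) :
    (x - 1) ^ ((2 : ℝ) / 3) ≤ (1 - 1 / (2 * x)) * x ^ ((2 : ℝ) / 3) := by
  have hx₀ : 0 < x := by linarith
  have hbernoulli : (1 + -(1 / x)) ^ ((2 : ℝ) / 3) ≤ 1 + 2 / 3 * -(1 / x) :=
    rpow_one_add_le_one_add_mul_self (by rw [neg_le_neg_iff, div_le_one hx₀]; exact hx)
      (by norm_num) (by norm_num)
  calc (x - 1) ^ ((2 : ℝ) / 3) = (1 + -(1 / x)) ^ ((2 : ℝ) / 3) * x ^ ((2 : ℝ) / 3) := by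
        rw [← Real.mul_rpow (by rw [← sub_eq_add_neg, sub_nonneg, div_le_one hx₀]; exact hx)
          hx₀.le]
        congr 1
        field_simp
        ring
    _ ≤ (1 - 1 / (2 * x)) * x ^ ((2 : ℝ) / 3) := by
        gcongr
        calc _ ≤ 1 + 2 / 3 * -(1 / x) := hbernoulli
          _ ≤ 1 - 1 / (2 * x) := by field_simp; linarith

lemma mul_lt_of_le_sq_add {C I x y : ℝ} (hC : 0 ≤ C) (hx : 0 ≤ x) (hy : 0 ≤ y)
    (hI : C * x ^ ((2 : ℝ) / 3) * y ^ ((2 : ℝ) / 3) < I) (h3 : 3 * y < I)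
    (hsq : I ≤ x ^ 2 + y) : C * y < I :=
  calc C * y ≤ C * (x ^ ((2 : ℝ) / 3) * y ^ ((2 : ℝ) / 3)) :=
        mul_le_mul_of_nonneg_left (le_rpow_two_thirds_mul_rpow_two_thirds hx hy (by linarith)) hC
    _ < I := by rwa [← mul_assoc]

/-- Here `I'` is the incidence count after deleting an element of degree `d` from the `x` side. -/
lemma max_bound_sub_one_lt {C I I' d x y : ℝ} (hC : 6 ≤ C) (hx : 1 ≤ x) (hy : 0 ≤ y)
    (hI : C * x ^ ((2 : ℝ) / 3) * y ^ ((2 : ℝ) / 3) < I) (hCx : C * x < I) (hCy : C * y < I)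
    (hdrop : I ≤ I' + d) (hd : d < I / (2 * x)) :
    max (C * (x - 1) ^ ((2 : ℝ) / 3) * y ^ ((2 : ℝ) / 3)) (max (3 * (x - 1)) (3 * y)) < I' := by
  have hx₀ : 0 < x := by linarith
  have hfactor : 1 / (2 * x) ≤ 1 / 2 := one_div_le_one_div_of_le (by norm_num) (by linarith)
  have hI' : (1 - 1 / (2 * x)) * I < I' := by
    calc (1 - 1 / (2 * x)) * I = I - I / (2 * x) := by field_simp
      _ < I' := by linarith
  have h6x : 6 * x ≤ C * x := mul_le_mul_of_nonneg_right hC hx₀.le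
  have h6y : 6 * y ≤ C * y := mul_le_mul_of_nonneg_right hC hy
  have hI₀ : 0 < I := by linarith
  refine max_lt ?_ (max_lt (by nlinarith) (by nlinarith))
  calc C * (x - 1) ^ ((2 : ℝ) / 3) * y ^ ((2 : ℝ) / 3)
      ≤ C * ((1 - 1 / (2 * x)) * x ^ ((2 : ℝ) / 3)) * y ^ ((2 : ℝ) / 3) := by
        gcongr
        exact sub_one_rpow_two_thirds_le hx
    _ = (1 - 1 / (2 * x)) * (C * x ^ ((2 : ℝ) / 3) * y ^ ((2 : ℝ) / 3)) := by ring
    _ < (1 - 1 / (2 * x)) * I := mul_lt_mul_of_pos_left hI (by linarith)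
    _ < I' := hI'

/-- in a critical system `(P, E)` (minimizing `n + e` among systems
with `I > max(C n^{2/3} e^{2/3}, 3n, 3e)`, `C = 10^{70}`), every point is
incident to at least `I/(2n)` lines and every line to at least `I/(2e)` points. -/
theorem stmt2 (C : ℝ) (hC : C = 10 ^ 70)
    (P : Set (ℂ × ℂ)) (E : Set (Set (ℂ × ℂ))) (hPfin : P.Finite) (hEfin : E.Finite)
    (hlines : ∀ L ∈ E, IsComplexLine L)
    (hbig : (incidences P E : ℝ) >
      max (C * (P.ncard : ℝ) ^ ((2 : ℝ) / 3) * (E.ncard : ℝ) ^ ((2 : ℝ) / 3))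
        (max (3 * P.ncard) (3 * E.ncard)))
    (hmin : ∀ (P' : Set (ℂ × ℂ)) (E' : Set (Set (ℂ × ℂ))), P'.Finite → E'.Finite →
      (∀ L ∈ E', IsComplexLine L) →
      (incidences P' E' : ℝ) >
        max (C * (P'.ncard : ℝ) ^ ((2 : ℝ) / 3) * (E'.ncard : ℝ) ^ ((2 : ℝ) / 3))
          (max (3 * P'.ncard) (3 * E'.ncard)) →
      P.ncard + E.ncard ≤ P'.ncard + E'.ncard) :
    (∀ p ∈ P, (incidences P E : ℝ) / (2 * P.ncard) ≤ ({L ∈ E | p ∈ L}.ncard : ℝ)) ∧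
    (∀ L ∈ E, (incidences P E : ℝ) / (2 * E.ncard) ≤ ({p ∈ P | p ∈ L}.ncard : ℝ)) := by
  obtain ⟨hIC, hI3P, hI3E⟩ := And.imp_right max_lt_iff.mp (max_lt_iff.mp hbig)
  have hC6 : (6 : ℝ) ≤ C := by rw [hC]; norm_num
  have hCE : C * E.ncard < incidences P E := mul_lt_of_le_sq_add (by linarith) (by positivity)
    (by positivity) hIC hI3E (by exact_mod_cast incidences_le_ncard_points_sq_add hPfin hEfin hlines)
  have hCP : C * P.ncard < incidences P E := mul_lt_of_le_sq_add (x := E.ncard) (by linarith)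
    (by positivity) (by positivity) (by rwa [mul_right_comm]) hI3P
    (by exact_mod_cast incidences_le_ncard_lines_sq_add hPfin hEfin hlines)
  refine ⟨fun p hp => ?_, fun L hL => ?_⟩ <;> by_contra! hdeg
  · have hn := Set.ncard_sdiff_singleton_add_one hp hPfin
    have hbig' := max_bound_sub_one_lt (I' := incidences (P \ {p}) E) hC6
      (by norm_cast; omega)
      (by positivity) hIC hCP hCE
      (by exact_mod_cast incidences_le_sdiff_point_add hPfin hEfin p) hdeg
    rw [← hn, Nat.cast_add_one, add_sub_cancel_right] at hbig'
    have hcard := hmin _ E hPfin.sdiff hEfin hlines hbig'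
    omega
  · have he := Set.ncard_sdiff_singleton_add_one hL hEfin
    have hbig' := max_bound_sub_one_lt (I' := incidences P (E \ {L})) hC6
      (by norm_cast; omega)
      (by positivity) (by rwa [mul_right_comm]) hCE hCP
      (by exact_mod_cast incidences_le_sdiff_line_add hPfin hEfin L) hdeg
    rw [← he, Nat.cast_add_one, add_sub_cancel_right, mul_right_comm, max_comm (3 * _)] at hbig'
    have hcard := hmin P _ hPfin hEfin.sdiff (fun L' hL' => hlines L' hL'.1) hbig'
    omega
end

section
/- Let p, q ∈ ℝ^4 with d = dist(p, q), let ℓ₁, ℓ₂ be two orthogonal 2-dimensional linear subspaces of ℝ^4 with ℓ₁ ⊕ ℓ₂ = ℝ^4, and let x = (p + ℓ₁) ∩ (q + ℓ₂) and y = (q + ℓ₁) ∩ (p + ℓ₂) (each intersection is a single point). Then x and y are antipodal points on the sphere of diameter d with center (p+q)/2; i.e., dist(x, (p+q)/2) = dist(y, (p+q)/2) = d/2 and x + y = p + q. -/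
/-! Since `x - p ⊥ x - q`, the point `x` sees the segment `pq` at a right angle and lies on the
Thales sphere over `pq` (likewise `y`). The vector `x + y - p - q` equals both
`(x - p) + (y - q) ∈ ℓ₁` and `(x - q) + (y - p) ∈ ℓ₁ᗮ`, hence vanishes. -/

open EuclideanGeometry InnerProductGeometry

theorem EuclideanGeometry.dist_midpoint_eq_half_dist_of_inner_vsub_vsub_eq_zero
    {V P : Type*} [NormedAddCommGroup V] [InnerProductSpace ℝ V] [MetricSpace P]
    [NormedAddTorsor V P] {p₁ p₂ p₃ : P} (h : inner ℝ (p₁ -ᵥ p₂) (p₃ -ᵥ p₂) = 0) :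
    dist p₂ (midpoint ℝ p₁ p₃) = dist p₁ p₃ / 2 := by
  have hright : ∠ p₁ p₂ p₃ = Real.pi / 2 := (inner_eq_zero_iff_angle_eq_pi_div_two _ _).1 h
  exact Sphere.angle_eq_pi_div_two_iff_mem_sphere_ofDiameter.1 hright

section

variable {E : Type*} [NormedAddCommGroup E] [InnerProductSpace ℝ E] (K : Submodule ℝ E)

theorem Submodule.dist_midpoint_eq_half_dist_of_sub_mem_of_sub_mem_orthogonal {p q x : E}
    (hp : x - p ∈ K) (hq : x - q ∈ Kᗮ) :
    dist x (midpoint ℝ p q) = dist p q / 2 := by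
  refine dist_midpoint_eq_half_dist_of_inner_vsub_vsub_eq_zero ?_
  rw [vsub_eq_sub, vsub_eq_sub, ← neg_sub x p, ← neg_sub x q, inner_neg_neg]
  exact K.inner_right_of_mem_orthogonal hp hq

theorem Submodule.add_eq_add_of_sub_mem_of_sub_mem_orthogonal {p q x y : E}
    (hx₁ : x - p ∈ K) (hx₂ : x - q ∈ Kᗮ) (hy₁ : y - q ∈ K) (hy₂ : y - p ∈ Kᗮ) :
    x + y = p + q := by
  have hK : x + y - (p + q) ∈ K := by
    convert K.add_mem hx₁ hy₁ using 1; abel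
  have hKperp : x + y - (p + q) ∈ Kᗮ := by
    convert Kᗮ.add_mem hx₂ hy₂ using 1; abel
  exact sub_eq_zero.1 (Submodule.disjoint_def.1 K.orthogonal_disjoint _ hK hKperp)

end

theorem stmt6_general (ℓ₁ : Submodule ℝ (EuclideanSpace ℝ (Fin 4)))
    (p q x y : EuclideanSpace ℝ (Fin 4))
    (hx1 : x - p ∈ ℓ₁) (hx2 : x - q ∈ ℓ₁ᗮ)
    (hy1 : y - q ∈ ℓ₁) (hy2 : y - p ∈ ℓ₁ᗮ) :
    dist x (midpoint ℝ p q) = dist p q / 2 ∧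
    dist y (midpoint ℝ p q) = dist p q / 2 ∧
    x + y = p + q := by
  refine ⟨ℓ₁.dist_midpoint_eq_half_dist_of_sub_mem_of_sub_mem_orthogonal hx1 hx2, ?_,
    ℓ₁.add_eq_add_of_sub_mem_of_sub_mem_orthogonal hx1 hx2 hy1 hy2⟩
  rw [midpoint_comm, dist_comm p q]
  exact ℓ₁.dist_midpoint_eq_half_dist_of_sub_mem_of_sub_mem_orthogonal hy1 hy2

/-- let `ℓ₁` be a 2-dimensional subspace of `ℝ⁴` and `ℓ₂ = ℓ₁ᗮ`
(so `ℓ₁ ⊕ ℓ₂ = ℝ⁴` and they are orthogonal 2-subspaces). If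
`x ∈ (p + ℓ₁) ∩ (q + ℓ₂)` and `y ∈ (q + ℓ₁) ∩ (p + ℓ₂)`, then `x` and `y` are
antipodal on the Thales sphere over `pq`: both at distance `dist p q / 2` from
the midpoint, and `x + y = p + q`. -/
theorem stmt6 (ℓ₁ : Submodule ℝ (EuclideanSpace ℝ (Fin 4)))
    (hdim : Module.finrank ℝ ℓ₁ = 2)
    (p q x y : EuclideanSpace ℝ (Fin 4))
    (hx1 : x - p ∈ ℓ₁) (hx2 : x - q ∈ ℓ₁ᗮ)
    (hy1 : y - q ∈ ℓ₁) (hy2 : y - p ∈ ℓ₁ᗮ) :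
    dist x (midpoint ℝ p q) = dist p q / 2 ∧
    dist y (midpoint ℝ p q) = dist p q / 2 ∧
    x + y = p + q :=
  stmt6_general ℓ₁ p q x y hx1 hx2 hy1 hy2
end

section
/- Assume the complex Szemerédi–Trotter bound (incidences of n points and e complex lines in ℂ² is O(n^{2/3}e^{2/3} + n + e)). Then there is an absolute constant c₁ > 0 such that for any n points in ℂ², either there are at least c₁ n² complex lines each incident to at least two of the points, or some complex line is incident to at least n/100 of the points. -/
open Finset
open scoped Classical

theorem Finset.sum_card_le_card_biUnion_add_sq {ι α : Type*} [DecidableEq ι] [DecidableEq α]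
    (s : Finset ι) (A : ι → Finset α) (h : (s : Set ι).Pairwise fun i j => #(A i ∩ A j) ≤ 1) :
    ∑ i ∈ s, #(A i) ≤ #(s.biUnion A) + #s ^ 2 := by
  induction s using Finset.induction_on with
  | empty => simp
  | insert a s ha ih =>
    have hsub : (s : Set ι) ⊆ ↑(insert a s) := coe_subset.2 (subset_insert a s)
    have hinter : #(A a ∩ s.biUnion A) ≤ #s := by
      rw [inter_biUnion]
      calc _ ≤ ∑ i ∈ s, #(A a ∩ A i) := card_biUnion_le
        _ ≤ ∑ _i ∈ s, 1 := sum_le_sum fun i hi =>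
            h (mem_insert_self a s) (mem_insert_of_mem hi) (fun hai => ha (hai ▸ hi))
        _ = #s := by simp
    have hunion := card_union_add_card_inter (A a) (s.biUnion A)
    have := ih (h.mono hsub)
    rw [sum_insert ha, biUnion_insert, card_insert_of_notMem ha]
    nlinarith

theorem Finset.sum_mul_sub_one_eq_sum_range {ι : Type*} (s : Finset ι) (k : ι → ℕ) {N : ℕ}
    (hk : ∀ i ∈ s, k i ≤ N) :
    ∑ i ∈ s, k i * (k i - 1) = ∑ j ∈ range N, 2 * j * #{i ∈ s | j < k i} := by
  have hlayer : ∀ i ∈ s, k i * (k i - 1) = ∑ j ∈ range N, if j < k i then 2 * j else 0 := by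
    intro i hi
    rw [← sum_filter, ← sum_range_id_mul_two, sum_mul]
    refine sum_congr ?_ fun j _ => mul_comm j 2
    ext j
    simp only [mem_range, mem_filter]
    have := hk i hi
    omega
  rw [sum_congr rfl hlayer, sum_comm]
  refine sum_congr rfl fun j _ => ?_
  rw [card_filter, mul_sum]
  simp

noncomputable def lineThrough (p q : ℂ × ℂ) : Set (ℂ × ℂ) :=
  if p.1 = q.1 then {r | r.1 = p.1}
  else {r | r.2 = (q.2 - p.2) / (q.1 - p.1) * r.1 + (p.2 - (q.2 - p.2) / (q.1 - p.1) * p.1)}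

theorem isComplexLine_lineThrough (p q : ℂ × ℂ) : IsComplexLine (lineThrough p q) := by
  unfold lineThrough
  split
  · exact Or.inr ⟨p.1, rfl⟩
  · exact Or.inl ⟨_, _, rfl⟩

theorem left_mem_lineThrough (p q : ℂ × ℂ) : p ∈ lineThrough p q := by
  unfold lineThrough
  split
  · rfl
  · show p.2 = _ * p.1 + (p.2 - _ * p.1)
    ring

theorem right_mem_lineThrough (p q : ℂ × ℂ) : q ∈ lineThrough p q := by
  unfold lineThrough
  split_ifs with h
  · exact h.symm
  · show q.2 = (q.2 - p.2) / (q.1 - p.1) * q.1 + (p.2 - (q.2 - p.2) / (q.1 - p.1) * p.1)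
    have : q.1 - p.1 ≠ 0 := sub_ne_zero.2 (Ne.symm h)
    field_simp
    ring

theorem IsComplexLine.eq_lineThrough {L : Set (ℂ × ℂ)} (hL : IsComplexLine L) {p q : ℂ × ℂ}
    (hpq : p ≠ q) (hp : p ∈ L) (hq : q ∈ L) : L = lineThrough p q := by
  rcases hL with ⟨a, b, rfl⟩ | ⟨c, rfl⟩
  · have hp : p.2 = a * p.1 + b := hp
    have hq : q.2 = a * q.1 + b := hq
    have hx : p.1 ≠ q.1 := fun h => hpq (Prod.ext h (by rw [hp, hq, h]))
    have hslope : (q.2 - p.2) / (q.1 - p.1) = a := by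
      have : q.1 - p.1 ≠ 0 := sub_ne_zero.2 (Ne.symm hx)
      rw [hp, hq]
      field_simp
      ring
    obtain rfl : b = p.2 - a * p.1 := by rw [hp]; ring
    rw [lineThrough, if_neg hx, hslope]
  · have hp : p.1 = c := hp
    have hq : q.1 = c := hq
    rw [lineThrough, if_pos (hp.trans hq.symm), hp]

theorem IsComplexLine.eq_of_mem_s10 {L M : Set (ℂ × ℂ)} (hL : IsComplexLine L) (hM : IsComplexLine M)
    {p q : ℂ × ℂ} (hpq : p ≠ q) (hpL : p ∈ L) (hqL : q ∈ L) (hpM : p ∈ M) (hqM : q ∈ M) :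
    L = M :=
  (hL.eq_lineThrough hpq hpL hqL).trans (hM.eq_lineThrough hpq hpM hqM).symm

theorem IsComplexLine.card_filter_inter_le_one {L M : Set (ℂ × ℂ)} (hL : IsComplexLine L)
    (hM : IsComplexLine M) (hLM : L ≠ M) (P : Finset (ℂ × ℂ)) :
    #({p ∈ P | p ∈ L} ∩ {p ∈ P | p ∈ M}) ≤ 1 :=
  card_le_one.2 fun p hp q hq => by
    simp only [mem_inter, mem_filter] at hp hq
    by_contra hpq
    exact hLM (hL.eq_of_mem_s10 hM hpq hp.1.2 hq.1.2 hp.2.2 hq.2.2)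

noncomputable def connectingLines (P : Finset (ℂ × ℂ)) : Finset (Set (ℂ × ℂ)) :=
  P.offDiag.image fun z => lineThrough z.1 z.2

theorem mem_connectingLines {P : Finset (ℂ × ℂ)} {L : Set (ℂ × ℂ)} :
    L ∈ connectingLines P ↔ IsComplexLine L ∧ 2 ≤ #{p ∈ P | p ∈ L} := by
  constructor
  · simp only [connectingLines, mem_image, mem_offDiag]
    rintro ⟨⟨p, q⟩, ⟨hp, hq, hpq⟩, rfl⟩
    refine ⟨isComplexLine_lineThrough p q, one_lt_card.2 ⟨p, ?_, q, ?_, hpq⟩⟩ <;>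
      simp [hp, hq, left_mem_lineThrough, right_mem_lineThrough]
  · rintro ⟨hL, h2⟩
    obtain ⟨p, hp, q, hq, hpq⟩ := one_lt_card.1 h2
    rw [mem_filter] at hp hq
    exact mem_image.2 ⟨(p, q), mem_offDiag.2 ⟨hp.1, hq.1, hpq⟩,
      (hL.eq_lineThrough hpq hp.2 hq.2).symm⟩

theorem card_offDiag_eq_sum_connectingLines (P : Finset (ℂ × ℂ)) :
    #P.offDiag = ∑ L ∈ connectingLines P, #{p ∈ P | p ∈ L}.offDiag := by
  have hunion : P.offDiag = (connectingLines P).biUnion fun L => {p ∈ P | p ∈ L}.offDiag := by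
    ext ⟨p, q⟩
    simp only [mem_offDiag, mem_biUnion, mem_filter]
    constructor
    · rintro ⟨hp, hq, hpq⟩
      exact ⟨lineThrough p q, mem_image.2 ⟨(p, q), mem_offDiag.2 ⟨hp, hq, hpq⟩, rfl⟩,
        ⟨hp, left_mem_lineThrough p q⟩, ⟨hq, right_mem_lineThrough p q⟩, hpq⟩
    · rintro ⟨L, -, ⟨hp, -⟩, ⟨hq, -⟩, hpq⟩
      exact ⟨hp, hq, hpq⟩
  rw [hunion, card_biUnion]
  intro L hL M hM hLM
  refine disjoint_left.2 fun ⟨p, q⟩ hL' hM' => ?_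
  simp only [mem_offDiag, mem_filter] at hL' hM'
  exact hLM ((mem_connectingLines.1 hL).1.eq_of_mem_s10 (mem_connectingLines.1 hM).1 hL'.2.2
    hL'.1.2 hL'.2.1.2 hM'.1.2 hM'.2.1.2)

theorem Nat.mul_le_two_mul_of_forall_mul_le_add_sq {m t n : ℕ}
    (hm : ∀ M ≤ m, M * t ≤ n + M ^ 2) (ht : 16 * n ≤ t ^ 2) (ht2 : 2 ≤ t) : m * t ≤ 2 * n := by
  by_contra! h
  have htpos : 0 < t := by omega
  -- the least `M` with `2 n < M t`; then `M ≤ t / 2`, so `M t ≤ n + M²` fails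
  set M := 2 * n / t + 1
  have hMm : M ≤ m := (Nat.div_lt_iff_lt_mul htpos).2 h
  have hMlow : 2 * n < M * t := by simpa [M, add_mul] using Nat.lt_div_mul_add (a := 2 * n) htpos
  have hMup : M * t ≤ 2 * n + t := by simpa [M, add_mul] using Nat.div_mul_le_self (2 * n) t
  have hM : 2 * M ≤ t := by nlinarith
  nlinarith [hm M hMm]

theorem card_mul_le_two_mul_card_of_sq_le (P : Finset (ℂ × ℂ)) {S : Finset (Set (ℂ × ℂ))} {t : ℕ}
    (hS : ∀ L ∈ S, IsComplexLine L ∧ t ≤ #{p ∈ P | p ∈ L}) (ht : 16 * #P ≤ t ^ 2) (ht2 : 2 ≤ t) :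
    #S * t ≤ 2 * #P := by
  refine Nat.mul_le_two_mul_of_forall_mul_le_add_sq (fun M hM => ?_) ht ht2
  obtain ⟨S', hS'S, rfl⟩ := exists_subset_card_eq hM
  calc #S' * t = ∑ _L ∈ S', t := by rw [sum_const, smul_eq_mul]
    _ ≤ ∑ L ∈ S', #{p ∈ P | p ∈ L} := sum_le_sum fun L hL => (hS L (hS'S hL)).2
    _ ≤ #(S'.biUnion fun L => {p ∈ P | p ∈ L}) + #S' ^ 2 :=
        sum_card_le_card_biUnion_add_sq _ _ fun L hL M hM hLM =>
          (hS L (hS'S hL)).1.card_filter_inter_le_one (hS M (hS'S hM)).1 hLM P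
    _ ≤ #P + #S' ^ 2 := by
        gcongr
        exact biUnion_subset.2 fun L _ => filter_subset _ _

def SzemerediTrotterBound (A : ℝ) : Prop :=
  ∀ (P : Set (ℂ × ℂ)) (E : Set (Set (ℂ × ℂ))), P.Finite → E.Finite →
    (∀ L ∈ E, IsComplexLine L) →
    (incidences P E : ℝ) ≤
      A * ((P.ncard : ℝ) ^ ((2 : ℝ) / 3) * (E.ncard : ℝ) ^ ((2 : ℝ) / 3) + P.ncard + E.ncard)

theorem SzemerediTrotterBound.mono {A B : ℝ} (hA : SzemerediTrotterBound A) (hAB : A ≤ B) :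
    SzemerediTrotterBound B := fun P E hP hE hL =>
  (hA P E hP hE hL).trans (mul_le_mul_of_nonneg_right hAB (by positivity))

theorem incidences_coe_finset (P : Finset (ℂ × ℂ)) (S : Finset (Set (ℂ × ℂ))) :
    incidences ↑P ↑S = ∑ L ∈ S, #{p ∈ P | p ∈ L} := by
  have : {pl : (ℂ × ℂ) × Set (ℂ × ℂ) | pl.1 ∈ (P : Set (ℂ × ℂ)) ∧ pl.2 ∈ (S : Set _) ∧ pl.1 ∈ pl.2}
      = ↑{pl ∈ P ×ˢ S | pl.1 ∈ pl.2} := by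
    ext pl
    simp [and_assoc]
  rw [incidences, this, Set.ncard_coe_finset, card_filter, sum_product_right]
  simp only [card_filter]

theorem rpow_two_thirds_pow_three {x : ℝ} (hx : 0 ≤ x) : (x ^ ((2 : ℝ) / 3)) ^ 3 = x ^ 2 := by
  rw [← Real.rpow_natCast, ← Real.rpow_mul hx]
  norm_num

theorem SzemerediTrotterBound.card_mul_pow_three_le {B : ℝ} (hST : SzemerediTrotterBound B)
    (hB : 0 ≤ B) (P : Finset (ℂ × ℂ)) {S : Finset (Set (ℂ × ℂ))} {t : ℕ}
    (hS : ∀ L ∈ S, IsComplexLine L ∧ t ≤ #{p ∈ P | p ∈ L}) (ht : 2 * B ≤ t) :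
    (#S : ℝ) * t ^ 3 ≤ 64 * B ^ 3 * #P ^ 2 + 4 * B * #P * t ^ 2 := by
  have hinc : (#S : ℝ) * t ≤ incidences ↑P ↑S := by
    rw [incidences_coe_finset]
    have := card_nsmul_le_sum S _ t fun L hL => (hS L hL).2
    rw [smul_eq_mul] at this
    exact_mod_cast this
  have hST' := hST ↑P ↑S P.finite_toSet S.finite_toSet fun L hL => (hS L hL).1
  rw [Set.ncard_coe_finset, Set.ncard_coe_finset] at hST'
  set n : ℝ := ((#P : ℕ) : ℝ)
  set e : ℝ := ((#S : ℕ) : ℝ)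
  set u := n ^ ((2 : ℝ) / 3) * e ^ ((2 : ℝ) / 3)
  have hn : 0 ≤ n := by positivity
  have he : 0 ≤ e := by positivity
  have hu : u ^ 3 = n ^ 2 * e ^ 2 := by
    rw [mul_pow, rpow_two_thirds_pow_three hn, rpow_two_thirds_pow_three he]
  -- `B e ≤ e t / 2` because `2 B ≤ t`
  have hmain : e * t ≤ 2 * B * (u + n) := by nlinarith
  rcases le_or_gt u n with hun | hnu
  · have : e * t ≤ 4 * B * n := by nlinarith
    have : e * t ^ 3 ≤ 4 * B * n * t ^ 2 := by nlinarith [sq_nonneg (t : ℝ)]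
    have : 0 ≤ 64 * B ^ 3 * n ^ 2 := by positivity
    linarith
  · have hcube : (e * t) ^ 3 ≤ 64 * B ^ 3 * n ^ 2 * e ^ 2 := by
      calc (e * t) ^ 3 ≤ (4 * B * u) ^ 3 := pow_le_pow_left₀ (by positivity) (by nlinarith) 3
        _ = 64 * B ^ 3 * n ^ 2 * e ^ 2 := by rw [mul_pow, hu]; ring
    have : e * t ^ 3 ≤ 64 * B ^ 3 * n ^ 2 := by
      rcases he.eq_or_lt with he0 | hepos
      · rw [← he0, zero_mul]; positivity
      · refine le_of_mul_le_mul_left (a := e ^ 2) ?_ (by positivity)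
        linarith [show e ^ 2 * (e * t ^ 3) = (e * t) ^ 3 by ring]
    have : 0 ≤ 4 * B * n * t ^ 2 := by positivity
    linarith

theorem SzemerediTrotterBound.card_le_of_forall_le_card_filter {B : ℝ}
    (hST : SzemerediTrotterBound B) (hB : 1 ≤ B) (P : Finset (ℂ × ℂ))
    {S : Finset (Set (ℂ × ℂ))} {t : ℕ} (hS : ∀ L ∈ S, IsComplexLine L ∧ t ≤ #{p ∈ P | p ∈ L})
    (ht : 2 * B ≤ t) :
    (#S : ℝ) ≤ 128 * B ^ 3 * #P ^ 2 / t ^ 3 + 2 * #P / t := by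
  have ht0 : (0 : ℝ) < t := by linarith
  have ht2 : 2 ≤ t := by exact_mod_cast (by linarith : (2 : ℝ) ≤ t)
  -- For very rich lines the elementary bound is used: unlike Szemerédi–Trotter, its constant `2`
  -- does not grow with `B`, which is what makes the threshold `n / 100` independent of `B`.
  rcases le_or_gt (16 * #P) (t ^ 2) with hrich | hmoderate
  · have h := card_mul_le_two_mul_card_of_sq_le P hS hrich ht2
    have : (#S : ℝ) ≤ 2 * #P / t := by
      rw [le_div_iff₀ ht0]
      exact_mod_cast h
    have : 0 ≤ 128 * B ^ 3 * (#P : ℝ) ^ 2 / t ^ 3 := by positivity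
    linarith
  · have h := hST.card_mul_pow_three_le (by linarith) P hS ht
    have hmod : (t : ℝ) ^ 2 ≤ 16 * #P := by exact_mod_cast hmoderate.le
    have h1 : 4 * B * #P * (t : ℝ) ^ 2 ≤ 64 * B * #P ^ 2 := by
      nlinarith [mul_le_mul_of_nonneg_left hmod (by positivity : (0 : ℝ) ≤ 4 * B * #P)]
    have h2 : 64 * B * (#P : ℝ) ^ 2 ≤ 64 * B ^ 3 * #P ^ 2 := by
      gcongr
      nlinarith [one_le_pow₀ (n := 2) hB]
    have : (#S : ℝ) ≤ 128 * B ^ 3 * #P ^ 2 / t ^ 3 := by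
      rw [le_div_iff₀ (by positivity)]
      linarith
    have : 0 ≤ 2 * (#P : ℝ) / t := by positivity
    linarith

theorem sum_range_le_of_le_inv_sq {f : ℕ → ℝ} {K : ℕ} (hK : 0 < K) {a b d : ℝ}
    (ha : 0 ≤ a) (hb : 0 ≤ b) (hd : 0 ≤ d)
    (hsmall : ∀ j < K, f j ≤ a) (hlarge : ∀ j, K ≤ j → f j ≤ b / j ^ 2 + d) (N : ℕ) :
    ∑ j ∈ range N, f j ≤ K * a + 2 * b / K + N * d := by
  rw [← sum_filter_add_sum_filter_not (range N) (· < K)]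
  have hlow : ∑ j ∈ range N with j < K, f j ≤ K * a :=
    calc _ ≤ ∑ j ∈ range N with j < K, a := sum_le_sum fun j hj => hsmall j (mem_filter.1 hj).2
      _ = #{j ∈ range N | j < K} * a := by rw [sum_const, nsmul_eq_mul]
      _ ≤ K * a := by
        gcongr
        calc #{j ∈ range N | j < K} ≤ #(range K) :=
              card_le_card fun j hj => mem_range.2 (mem_filter.1 hj).2
          _ = K := card_range K
  have hinv : ∑ j ∈ range N with ¬j < K, ((j : ℝ) ^ 2)⁻¹ ≤ 2 / K :=
    calc _ ≤ ∑ j ∈ Ioo (K - 1) N, ((j : ℝ) ^ 2)⁻¹ := by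
          refine sum_le_sum_of_subset_of_nonneg (fun j hj => ?_) fun _ _ _ => by positivity
          simp only [mem_filter, mem_range] at hj
          exact mem_Ioo.2 ⟨by omega, hj.1⟩
      _ ≤ 2 / ((K - 1 : ℕ) + 1) := sum_Ioo_inv_sq_le _ _
      _ = 2 / K := by rw [Nat.cast_sub hK, Nat.cast_one, sub_add_cancel]
  have hhigh : ∑ j ∈ range N with ¬j < K, f j ≤ 2 * b / K + N * d :=
    calc _ ≤ ∑ j ∈ range N with ¬j < K, (b * ((j : ℝ) ^ 2)⁻¹ + d) :=
          sum_le_sum fun j hj => div_eq_mul_inv b _ ▸ hlarge j (not_lt.1 (mem_filter.1 hj).2)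
      _ = b * ∑ j ∈ range N with ¬j < K, ((j : ℝ) ^ 2)⁻¹ + #{j ∈ range N | ¬j < K} * d := by
          rw [sum_add_distrib, mul_sum, sum_const, nsmul_eq_mul]
      _ ≤ b * (2 / K) + N * d := by
          gcongr
          calc #{j ∈ range N | ¬j < K} ≤ #(range N) := card_filter_le _ _
            _ = N := card_range N
      _ = 2 * b / K + N * d := by ring
  linarith

theorem card_mul_pred_eq_sum_range (P : Finset (ℂ × ℂ)) {N : ℕ}
    (hN : ∀ L ∈ connectingLines P, #{p ∈ P | p ∈ L} ≤ N) :
    #P * (#P - 1) =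
      ∑ j ∈ range N, 2 * j * #{L ∈ connectingLines P | j < #{p ∈ P | p ∈ L}} := by
  rw [Nat.mul_sub_one, ← offDiag_card, card_offDiag_eq_sum_connectingLines]
  simp only [offDiag_card, ← Nat.mul_sub_one]
  exact sum_mul_sub_one_eq_sum_range _ _ hN

theorem SzemerediTrotterBound.two_mul_card_filter_lt_le {B : ℝ}
    (hST : SzemerediTrotterBound B) (hB : 1 ≤ B) (P : Finset (ℂ × ℂ)) {j : ℕ} (hj : 2 * B ≤ j) :
    (2 * j * #{L ∈ connectingLines P | j < #{p ∈ P | p ∈ L}} : ℝ) ≤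
      256 * B ^ 3 * #P ^ 2 / j ^ 2 + 4 * #P := by
  have hj0 : (0 : ℝ) < j := by linarith
  have hrich := hST.card_le_of_forall_le_card_filter hB P
    (S := {L ∈ connectingLines P | j < #{p ∈ P | p ∈ L}}) (t := j) (fun L hL => by
      rw [mem_filter] at hL
      exact ⟨(mem_connectingLines.1 hL.1).1, hL.2.le⟩) hj
  calc (2 * j * #{L ∈ connectingLines P | j < #{p ∈ P | p ∈ L}} : ℝ)
      ≤ 2 * j * (128 * B ^ 3 * #P ^ 2 / j ^ 3 + 2 * #P / j) := by gcongr
    _ = 256 * B ^ 3 * #P ^ 2 / j ^ 2 + 4 * #P := by field_simp; ring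

theorem SzemerediTrotterBound.sq_card_le_card_connectingLines {B : ℝ}
    (hST : SzemerediTrotterBound B) (hB : 1 ≤ B) (P : Finset (ℂ × ℂ))
    (hP : ∀ L, IsComplexLine L → 100 * #{p ∈ P | p ∈ L} < #P) :
    (#P : ℝ) ^ 2 ≤ 4 * ⌈2048 * B ^ 3⌉₊ ^ 2 * #(connectingLines P) := by
  rcases P.eq_empty_or_nonempty with rfl | ⟨p, hp⟩
  · rw [card_empty, Nat.cast_zero, zero_pow two_ne_zero]
    positivity
  set K := ⌈2048 * B ^ 3⌉₊
  set n := #P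
  set T := connectingLines P
  have hn : 100 < n := by
    have := hP {r | r.1 = p.1} (Or.inr ⟨p.1, rfl⟩)
    have : 0 < #{r ∈ P | r ∈ {r : ℂ × ℂ | r.1 = p.1}} := card_pos.2 ⟨p, mem_filter.2 ⟨hp, rfl⟩⟩
    omega
  have hpairs := card_mul_pred_eq_sum_range P (N := n / 100) fun L hL => by
    have := hP L (mem_connectingLines.1 hL).1
    exact (Nat.le_div_iff_mul_le (by norm_num)).2 (by omega)
  have hK : 2048 * B ^ 3 ≤ K := Nat.le_ceil _
  have hKpos : (0 : ℝ) < K := by nlinarith [one_le_pow₀ (n := 3) hB]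
  have hBK : 2 * B ≤ K := by nlinarith [one_le_pow₀ (n := 2) hB]
  have hlayers := sum_range_le_of_le_inv_sq
    (f := fun j => (2 * j * #{L ∈ T | j < #{p ∈ P | p ∈ L}} : ℝ))
    (a := 2 * K * #T) (b := 256 * B ^ 3 * n ^ 2) (d := 4 * n) (by exact_mod_cast hKpos)
    (by positivity) (by positivity) (by positivity)
    (fun j hj => by
      have : (#{L ∈ T | j < #{p ∈ P | p ∈ L}} : ℝ) ≤ #T := by exact_mod_cast card_filter_le _ _
      have : (j : ℝ) ≤ K := by exact_mod_cast hj.le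
      gcongr)
    (fun j hj => hST.two_mul_card_filter_lt_le hB P (hBK.trans (by exact_mod_cast hj)))
    (n / 100)
  have hrich : (2 * (256 * B ^ 3 * n ^ 2) / K : ℝ) ≤ n ^ 2 / 4 := by
    rw [div_le_iff₀ hKpos]
    nlinarith [sq_nonneg (n : ℝ)]
  have hN : ((n / 100 : ℕ) : ℝ) ≤ n / 100 := Nat.cast_div_le
  have hn100 : (100 : ℝ) ≤ n := by exact_mod_cast hn.le
  have hcast : ((n * (n - 1) : ℕ) : ℝ) = (n : ℝ) ^ 2 - n := by
    rw [Nat.cast_mul, Nat.cast_sub (by omega), Nat.cast_one]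
    ring
  rw [hpairs] at hcast
  push_cast at hcast hlayers
  have hbound : (n : ℝ) ^ 2 - n ≤ 2 * K ^ 2 * #T + n ^ 2 / 4 + n ^ 2 / 25 := by
    rw [← hcast]
    nlinarith [mul_le_mul_of_nonneg_right hN (by positivity : (0 : ℝ) ≤ 4 * n)]
  nlinarith

/-- complex Beck theorem: assuming the complex Szemerédi–Trotter
bound, there is `c₁ > 0` such that any `n` points in `ℂ²` either determine at
least `c₁ n²` complex lines each containing at least two of the points, or some
complex line contains at least `n/100` of the points. -/
theorem stmt10
    (A : ℝ)
    (hST : ∀ (P : Set (ℂ × ℂ)) (E : Set (Set (ℂ × ℂ))), P.Finite → E.Finite →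
      (∀ L ∈ E, IsComplexLine L) →
      (incidences P E : ℝ) ≤
        A * ((P.ncard : ℝ) ^ ((2 : ℝ) / 3) * (E.ncard : ℝ) ^ ((2 : ℝ) / 3) +
          P.ncard + E.ncard)) :
    ∃ c₁ : ℝ, 0 < c₁ ∧ ∀ (P : Set (ℂ × ℂ)), P.Finite →
      c₁ * (P.ncard : ℝ) ^ 2 ≤
          ({L : Set (ℂ × ℂ) | IsComplexLine L ∧ 2 ≤ (P ∩ L).ncard}.ncard : ℝ) ∨
        ∃ L : Set (ℂ × ℂ), IsComplexLine L ∧ (P.ncard : ℝ) / 100 ≤ ((P ∩ L).ncard : ℝ) := by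
  set B := max A 1
  have hB : SzemerediTrotterBound B := SzemerediTrotterBound.mono hST (le_max_left A 1)
  set K := ⌈2048 * B ^ 3⌉₊
  have hK : (0 : ℝ) < K := Nat.cast_pos.2 (Nat.ceil_pos.2 (by positivity))
  refine ⟨1 / (4 * K ^ 2), by positivity, fun P hP => ?_⟩
  obtain ⟨P, rfl⟩ := hP.exists_finset_coe
  have hinter : ∀ L, ((P : Set (ℂ × ℂ)) ∩ L).ncard = #{p ∈ P | p ∈ L} := fun L => by
    rw [← Set.ncard_coe_finset, coe_filter]
    rfl
  by_cases hrich : ∃ L, IsComplexLine L ∧ (#P : ℝ) / 100 ≤ #{p ∈ P | p ∈ L}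
  · simpa only [hinter, Set.ncard_coe_finset] using Or.inr hrich
  push Not at hrich
  left
  have hlines :
      {L | IsComplexLine L ∧ 2 ≤ ((P : Set (ℂ × ℂ)) ∩ L).ncard} = ↑(connectingLines P) := by
    ext L
    simp only [hinter, mem_coe, mem_connectingLines, Set.mem_ofPred_eq]
  rw [hlines, Set.ncard_coe_finset, Set.ncard_coe_finset, div_mul_eq_mul_div, one_mul,
    div_le_iff₀ (by positivity), mul_comm _ (4 * _)]
  refine hB.sq_card_le_card_connectingLines (le_max_right A 1) P fun L hL => ?_
  have := hrich L hL
  exact_mod_cast (by linarith : (100 : ℝ) * #{p ∈ P | p ∈ L} < #P)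
end
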